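/- Let θ : F(a,b) → F(a,b) be the endomorphism of the free group on two generators determined by θ(a) = ab and θ(b) = ba. If w ∈ F(a,b) with w ≠ 1 and i, j are positive integers such that θⁱ(w) is conjugate in F(a,b) to wʲ, then j = 2ⁱ. -/

import Mathlib

/-!
The translation length `τ x` of `x ∈ F(a,b)`, the length of a cyclically reduced conjugate of `x`,
satisfies `norm (x ^ n) = n * τ x + const` for `n ≥ 1`. Hence it is a conjugacy invariant,
`τ (x ^ j) = j * τ x`, and `τ x > 0` for `x ≠ 1`. Applying `θ` letterwise to a reduced word gives a
reduced word, so `θ` doubles word length and therefore `τ`. Thus `2 ^ i * τ w = j * τ w`.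
-/

def θ : FreeGroup Bool →* FreeGroup Bool :=
  FreeGroup.lift fun x : Bool =>
    if x then FreeGroup.of true * FreeGroup.of false
    else FreeGroup.of false * FreeGroup.of true

namespace FreeGroup

open reduceCyclically

variable {α β : Type*} [DecidableEq α] [DecidableEq β]

def translationLength (x : FreeGroup α) : ℕ := (reduceCyclically x.toWord).length

theorem norm_pow_eq (x : FreeGroup α) {n : ℕ} (hn : n ≠ 0) :
    norm (x ^ n) = n * translationLength x + 2 * (conjugator x.toWord).length := by
  rw [norm, toWord_pow, reduce_flatten_replicate isReduced_toWord, if_neg hn]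
  simp only [List.append_assoc, List.length_append, List.length_flatten, List.map_replicate,
    List.sum_replicate, smul_eq_mul, invRev_length, translationLength]
  ring

theorem eq_one_of_translationLength_eq_zero {x : FreeGroup α} (h : translationLength x = 0) :
    x = 1 := by
  have hx := conj_conjugator_reduceCyclically x.toWord
  rw [List.eq_nil_of_length_eq_zero h, List.append_nil] at hx
  rw [← mk_toWord (x := x), ← hx, ← mul_mk, ← inv_mk, mul_inv_cancel, one_eq_mk]

theorem translationLength_eq_norm_pow_two_sub_norm (x : FreeGroup α) :
    translationLength x = norm (x ^ 2) - norm x := by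
  rw [norm_pow_eq x two_ne_zero, ← pow_one x, norm_pow_eq x one_ne_zero, pow_one]
  omega

theorem translationLength_pow (x : FreeGroup α) (j : ℕ) :
    translationLength (x ^ j) = j * translationLength x := by
  rcases eq_or_ne j 0 with rfl | hj
  · simp [translationLength]
  rw [translationLength_eq_norm_pow_two_sub_norm, ← pow_mul, norm_pow_eq x hj,
    norm_pow_eq x (mul_ne_zero hj two_ne_zero), Nat.mul_comm j 2, Nat.mul_assoc,
    Nat.add_sub_add_right, two_mul, Nat.add_sub_cancel]

theorem translationLength_map_of_norm_map (φ : FreeGroup α →* FreeGroup β) (k : ℕ)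
    (hφ : ∀ x, norm (φ x) = k * norm x) (x : FreeGroup α) :
    translationLength (φ x) = k * translationLength x := by
  rw [translationLength_eq_norm_pow_two_sub_norm, translationLength_eq_norm_pow_two_sub_norm,
    ← map_pow, hφ, hφ, Nat.mul_sub]

theorem norm_conj_le (g x : FreeGroup α) : norm (g * x * g⁻¹) ≤ norm x + 2 * norm g :=
  calc norm (g * x * g⁻¹) ≤ norm g + norm x + norm g⁻¹ :=
        (norm_mul_le _ _).trans (Nat.add_le_add_right (norm_mul_le _ _) _)
    _ = norm x + 2 * norm g := by rw [norm_inv_eq]; ring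

theorem translationLength_le_of_norm_pow_le {x y : FreeGroup α} (K : ℕ)
    (h : ∀ n, norm (x ^ n) ≤ norm (y ^ n) + K) : translationLength x ≤ translationLength y := by
  by_contra! hlt
  obtain ⟨n, hn⟩ : ∃ n, n = 2 * (conjugator y.toWord).length + K + 1 := ⟨_, rfl⟩
  have hxy := h n
  rw [norm_pow_eq x (by omega : n ≠ 0), norm_pow_eq y (by omega : n ≠ 0)] at hxy
  have hmul : n * (translationLength y + 1) ≤ n * translationLength x := Nat.mul_le_mul_left n hlt
  rw [Nat.mul_succ] at hmul
  omega

theorem translationLength_le_of_isConj {x y : FreeGroup α} (h : IsConj x y) :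
    translationLength x ≤ translationLength y := by
  obtain ⟨g, rfl⟩ := isConj_iff.1 h.symm
  refine translationLength_le_of_norm_pow_le (2 * norm g) fun n => ?_
  rw [conj_pow]
  exact norm_conj_le g (y ^ n)

theorem translationLength_eq_of_isConj {x y : FreeGroup α} (h : IsConj x y) :
    translationLength x = translationLength y :=
  (translationLength_le_of_isConj h).antisymm (translationLength_le_of_isConj h.symm)

end FreeGroup

open FreeGroup (mk)

-- The letter `(x, false)` stands for `x⁻¹`, and `θ x⁻¹ = (!x)⁻¹ * x⁻¹`.
def θLetter (p : Bool × Bool) : List (Bool × Bool) :=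
  if p.2 then [(p.1, true), (!p.1, true)] else [(!p.1, false), (p.1, false)]

theorem θ_mk_singleton (p : Bool × Bool) : θ (mk [p]) = mk (θLetter p) := by
  rcases p with ⟨_ | _, _ | _⟩ <;> decide

theorem θ_mk (L : List (Bool × Bool)) : θ (mk L) = mk (L.flatMap θLetter) := by
  induction L with
  | nil => exact map_one θ
  | cons p L ih =>
    rw [← List.singleton_append, ← FreeGroup.mul_mk, map_mul, ih, θ_mk_singleton,
      List.flatMap_append, List.flatMap_singleton, FreeGroup.mul_mk]

theorem isReduced_flatMap_θLetter {L : List (Bool × Bool)} (h : FreeGroup.IsReduced L) :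
    FreeGroup.IsReduced (L.flatMap θLetter) := by
  -- the last letter of `θLetter p` and the first of `θLetter q` cancel only if `p` and `q` do
  rw [FreeGroup.IsReduced, List.flatMap, List.isChain_flatten (by simp [θLetter]),
    List.isChain_map]
  constructor
  · simp only [List.mem_map]
    rintro _ ⟨⟨_ | _, _ | _⟩, -, rfl⟩ <;> simp [θLetter]
  · refine h.imp ?_
    rintro ⟨_ | _, _ | _⟩ ⟨_ | _, _ | _⟩ <;> simp [θLetter]

theorem norm_θ (x : FreeGroup Bool) : (θ x).norm = 2 * x.norm := by
  have hlen : ∀ p, (θLetter p).length = 2 := fun p => by unfold θLetter; split <;> rfl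
  conv_lhs => rw [← FreeGroup.mk_toWord (x := x)]
  rw [θ_mk, FreeGroup.norm, FreeGroup.toWord_mk,
    (isReduced_flatMap_θLetter FreeGroup.isReduced_toWord).reduce_eq, List.length_flatMap,
    FreeGroup.norm]
  simp [hlen, mul_comm]

theorem translationLength_θ_iterate (i : ℕ) (x : FreeGroup Bool) :
    FreeGroup.translationLength ((⇑θ)^[i] x) = 2 ^ i * FreeGroup.translationLength x := by
  induction i with
  | zero => simp
  | succ i ih =>
    rw [Function.iterate_succ_apply', FreeGroup.translationLength_map_of_norm_map θ 2 norm_θ, ih,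
      pow_succ, mul_comm _ 2, mul_assoc]

theorem stmt_17_general (w : FreeGroup Bool) (hw : w ≠ 1) (i j : ℕ)
    (hconj : IsConj ((⇑θ)^[i] w) (w ^ j)) : j = 2 ^ i := by
  have hpos : 0 < w.translationLength :=
    Nat.pos_of_ne_zero fun h => hw (FreeGroup.eq_one_of_translationLength_eq_zero h)
  have h := FreeGroup.translationLength_eq_of_isConj hconj
  rw [translationLength_θ_iterate, FreeGroup.translationLength_pow] at h
  exact (Nat.eq_of_mul_eq_mul_right hpos h).symm

/-- For the endomorphism `θ` of `F(a,b)` with `θ(a) = ab`, `θ(b) = ba`: if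
`w ≠ 1` and `i, j` are positive integers with `θⁱ(w)` conjugate to `wʲ`, then `j = 2ⁱ`. -/
theorem stmt_17 (w : FreeGroup Bool) (hw : w ≠ 1) (i j : ℕ) (hi : 0 < i) (hj : 0 < j)
    (hconj : IsConj ((⇑θ)^[i] w) (w ^ j)) : j = 2 ^ i :=
  stmt_17_general w hw i j hconj
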